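/- Let u ∈ C³(ℝⁿ, ℝ^m) solve the Ginzburg–Landau system Δu = (|u|² − 1)u, and set Q(u) = (|u|²−1)/2, W(u) = (1/4)(|u|²−1)², P(x) = (1/2)|∇u(x)|² + Q(u(x)). Then ΔP ≥ B + 2(2Q(u)+1)P ≥ 2|u|²P pointwise whenever P ≥ 0, where B = Σ_{i,j}|u_{x_i x_j}|². -/

import Mathlib

open scoped RealInnerProductSpace

/-- The `i`-th standard basis vector of `ℝⁿ`. -/
noncomputable def en (n : ℕ) (i : Fin n) : EuclideanSpace ℝ (Fin n) :=
  EuclideanSpace.single i (1 : ℝ)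

/-!
Write `W(u) = (|u|² - 1)²/4`, so that the system reads `Δu = ∇W(u)`. The Bochner formula for
`|∇u|²` (which needs `Δ` to commute with `∂ⱼ`, i.e. the symmetry of `D³u`) and
`Δ(|u|²) = 2(|∇u|² + ⟨u, Δu⟩)` give
`ΔP = B + Σⱼ D²W(u)(u_{x_j}, u_{x_j}) + |∇u|² + ⟨u, ∇W(u)⟩`, where
`D²W(u)(ξ, ξ) = 2Q(u)|ξ|² + 2⟨u, ξ⟩²` and `⟨u, ∇W(u)⟩ = 2Q(u)|u|²`. As `2Q(u) + 1 = |u|²`, this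
is the identity `ΔP = B + 2Σⱼ⟨u, u_{x_j}⟩² + 2|u|²P`, from which both inequalities follow.
-/

open InnerProductSpace Laplacian

section Calculus

variable {E F : Type*} [NormedAddCommGroup E] [NormedSpace ℝ E] [NormedAddCommGroup F]
  [NormedSpace ℝ F] {f : E → F} {x : E}

theorem fderiv_fderiv_apply_eq_iteratedFDeriv (hf : DifferentiableAt ℝ (fderiv ℝ f) x)
    (v w : E) : fderiv ℝ (fun y => fderiv ℝ f y w) x v = iteratedFDeriv ℝ 2 f x ![v, w] := by
  rw [fderiv_clm_apply hf (differentiableAt_const w), iteratedFDeriv_two_apply]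
  simp

theorem ContDiff.iteratedFDeriv_three_swap_left (hf : ContDiff ℝ 3 f) (a b c : E) :
    iteratedFDeriv ℝ 3 f x ![a, b, c] = iteratedFDeriv ℝ 3 f x ![b, a, c] := by
  have hsymm : IsSymmSndFDerivAt ℝ (fderiv ℝ f) x :=
    (hf.fderiv_right (m := 2) (by norm_num)).contDiffAt.isSymmSndFDerivAt (by simp)
  have hinit : ∀ a b : E, Fin.init ![a, b, c] = ![a, b] := fun a b => by
    funext i; fin_cases i <;> rfl
  rw [iteratedFDeriv_succ_apply_right (n := 2), iteratedFDeriv_succ_apply_right (n := 2), hinit,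
    hinit]
  exact congrArg (· c) (IsSymmSndFDerivAt.iteratedFDeriv_cons (hf := hsymm))

theorem ContDiff.iteratedFDeriv_three_swap_right (hf : ContDiff ℝ 3 f) (a b c : E) :
    iteratedFDeriv ℝ 3 f x ![a, b, c] = iteratedFDeriv ℝ 3 f x ![a, c, b] := by
  have hdiff : DifferentiableAt ℝ (iteratedFDeriv ℝ 2 f) x :=
    (hf.differentiable_iteratedFDeriv (by norm_num)) x
  have hsymm : (fun y => iteratedFDeriv ℝ 2 f y ![b, c]) =
      fun y => iteratedFDeriv ℝ 2 f y ![c, b] :=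
    funext fun y => (hf.contDiffAt.isSymmSndFDerivAt (by simp; norm_num)).iteratedFDeriv_cons
  calc iteratedFDeriv ℝ 3 f x ![a, b, c]
      = fderiv ℝ (fun y => iteratedFDeriv ℝ 2 f y ![b, c]) x a := by
        rw [fderiv_continuousMultilinear_apply_const_apply hdiff]; rfl
    _ = fderiv ℝ (fun y => iteratedFDeriv ℝ 2 f y ![c, b]) x a := by rw [hsymm]
    _ = iteratedFDeriv ℝ 3 f x ![a, c, b] := by
        rw [fderiv_continuousMultilinear_apply_const_apply hdiff]; rfl

theorem ContDiff.iteratedFDeriv_two_fderiv_apply (hf : ContDiff ℝ 3 f) (a w : E) :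
    iteratedFDeriv ℝ 2 (fun y => fderiv ℝ f y w) x ![a, a] =
      fderiv ℝ (fun y => iteratedFDeriv ℝ 2 f y ![a, a]) x w := by
  have hinit : Fin.init ![a, a, w] = ![a, a] := by
    funext i; fin_cases i <;> rfl
  rw [iteratedFDeriv_clm_apply_const_apply (hf.fderiv_right (m := 2) (by norm_num)) le_rfl,
    fderiv_continuousMultilinear_apply_const_apply
      ((hf.differentiable_iteratedFDeriv (by norm_num)) x)]
  calc iteratedFDeriv ℝ 2 (fderiv ℝ f) x ![a, a] w = iteratedFDeriv ℝ 3 f x ![a, a, w] := by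
        rw [iteratedFDeriv_succ_apply_right (n := 2), hinit]; rfl
    _ = iteratedFDeriv ℝ 3 f x ![w, a, a] := by
        rw [hf.iteratedFDeriv_three_swap_right, hf.iteratedFDeriv_three_swap_left]
    _ = fderiv ℝ (iteratedFDeriv ℝ 2 f) x w ![a, a] := rfl

end Calculus

section NormSq

variable {E F : Type*} [NormedAddCommGroup E] [NormedSpace ℝ E] [NormedAddCommGroup F]
  [InnerProductSpace ℝ F] {g : E → F} {x : E}

theorem fderiv_fun_norm_sq_apply (hg : DifferentiableAt ℝ g x) (v : E) :
    fderiv ℝ (fun y => ‖g y‖ ^ 2) x v = 2 * ⟪g x, fderiv ℝ g x v⟫ := by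
  rw [hg.hasFDerivAt.norm_sq.fderiv]
  simp

theorem ContDiff.iteratedFDeriv_two_norm_sq_apply (hg : ContDiff ℝ 2 g) (v : E) :
    iteratedFDeriv ℝ 2 (fun y => ‖g y‖ ^ 2) x ![v, v] =
      2 * (‖fderiv ℝ g x v‖ ^ 2 + ⟪g x, iteratedFDeriv ℝ 2 g x ![v, v]⟫) := by
  have hg1 : Differentiable ℝ g := hg.differentiable (by norm_num)
  have hDg : Differentiable ℝ (fderiv ℝ g) :=
    (hg.fderiv_right (m := 1) (by norm_num)).differentiable (by norm_num)
  have hDg_apply : DifferentiableAt ℝ (fun y => fderiv ℝ g y v) x :=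
    (hDg x).clm_apply (differentiableAt_const v)
  have hDN : DifferentiableAt ℝ (fderiv ℝ fun y => ‖g y‖ ^ 2) x :=
    ((hg.norm_sq ℝ).fderiv_right (m := 1) (by norm_num)).differentiable (by norm_num) x
  have hfirst : (fun y => fderiv ℝ (fun y => ‖g y‖ ^ 2) y v) =
      fun y => 2 * ⟪g y, fderiv ℝ g y v⟫ :=
    funext fun y => fderiv_fun_norm_sq_apply (hg1 y) v
  rw [← fderiv_fderiv_apply_eq_iteratedFDeriv hDN, hfirst,
    fderiv_const_mul ((hg1 x).inner ℝ hDg_apply), smul_apply,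
    fderiv_inner_apply ℝ (hg1 x) hDg_apply, fderiv_fderiv_apply_eq_iteratedFDeriv (hDg x),
    real_inner_self_eq_norm_sq, smul_eq_mul]
  ring

theorem inner_fderiv_fderiv_norm_sq_sub_one_smul (hg : DifferentiableAt ℝ g x) (w : E) :
    ⟪fderiv ℝ g x w, fderiv ℝ (fun y => (‖g y‖ ^ 2 - 1) • g y) x w⟫ =
      (‖g x‖ ^ 2 - 1) * ‖fderiv ℝ g x w‖ ^ 2 + 2 * ⟪g x, fderiv ℝ g x w⟫ ^ 2 := by
  rw [((hg.hasFDerivAt.norm_sq.sub_const 1).fun_smul hg.hasFDerivAt).fderiv]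
  simp [inner_add_right, real_inner_smul_right, real_inner_comm]
  ring

end NormSq

section Laplacian

variable {E F : Type*} [NormedAddCommGroup E] [InnerProductSpace ℝ E] [FiniteDimensional ℝ E]
  [NormedAddCommGroup F] [NormedSpace ℝ F] {x : E}

theorem laplacian_fun_sum {ι : Type*} {s : Finset ι} {f : ι → E → F}
    (hf : ∀ i ∈ s, ContDiffAt ℝ 2 (f i) x) :
    Δ (fun y => ∑ i ∈ s, f i y) x = ∑ i ∈ s, Δ (f i) x := by
  simp only [laplacian_eq_iteratedFDeriv_stdOrthonormalBasis, iteratedFDeriv_fun_sum_apply hf,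
    sum_apply]
  exact Finset.sum_comm

theorem ContDiff.laplacian_fderiv_apply {f : E → F} (hf : ContDiff ℝ 3 f) (w : E) :
    Δ (fun y => fderiv ℝ f y w) x = fderiv ℝ (Δ f) x w := by
  have hdiff : DifferentiableAt ℝ (iteratedFDeriv ℝ 2 f) x :=
    (hf.differentiable_iteratedFDeriv (by norm_num)) x
  simp only [laplacian_eq_iteratedFDeriv_stdOrthonormalBasis, hf.iteratedFDeriv_two_fderiv_apply]
  rw [fderiv_fun_sum fun i _ => hdiff.continuousMultilinear_apply_const _]
  simp

theorem ContDiff.laplacian_norm_sq {G : Type*} [NormedAddCommGroup G] [InnerProductSpace ℝ G]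
    {g : E → G} (hg : ContDiff ℝ 2 g) {ι : Type*} [Fintype ι] (b : OrthonormalBasis ι ℝ E) :
    Δ (fun y => ‖g y‖ ^ 2) x = 2 * (∑ i, ‖fderiv ℝ g x (b i)‖ ^ 2 + ⟪g x, Δ g x⟫) := by
  simp only [laplacian_eq_iteratedFDeriv_orthonormalBasis _ b, hg.iteratedFDeriv_two_norm_sq_apply,
    inner_sum, Finset.mul_sum, Finset.sum_add_distrib, mul_add]

end Laplacian

section GinzburgLandau

variable {n : ℕ} {F : Type*} [NormedAddCommGroup F] [InnerProductSpace ℝ F]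

theorem basisFun_eq_en (i : Fin n) : EuclideanSpace.basisFun (Fin n) ℝ i = en n i := by
  simp [en]

theorem laplacian_eq_sum_en {G : Type*} [NormedAddCommGroup G] [NormedSpace ℝ G]
    (f : EuclideanSpace ℝ (Fin n) → G) (x : EuclideanSpace ℝ (Fin n)) :
    Δ f x = ∑ i, iteratedFDeriv ℝ 2 f x ![en n i, en n i] := by
  rw [laplacian_eq_iteratedFDeriv_orthonormalBasis f (EuclideanSpace.basisFun (Fin n) ℝ)]
  simp only [basisFun_eq_en]

noncomputable def pFunction (u : EuclideanSpace ℝ (Fin n) → F) (y : EuclideanSpace ℝ (Fin n)) :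
    ℝ :=
  (1 / 2) * ∑ j : Fin n, ‖fderiv ℝ u y (en n j)‖ ^ 2 + (‖u y‖ ^ 2 - 1) / 2

variable {u : EuclideanSpace ℝ (Fin n) → F}

theorem ContDiff.laplacian_pFunction (hu : ContDiff ℝ 3 u) (x : EuclideanSpace ℝ (Fin n)) :
    Δ (pFunction u) x = (1 / 2) *
      (∑ j, Δ (fun y => ‖fderiv ℝ u y (en n j)‖ ^ 2) x + Δ (fun y => ‖u y‖ ^ 2) x) := by
  have hDu : ∀ j, ContDiffAt ℝ 2 (fun y => ‖fderiv ℝ u y (en n j)‖ ^ 2) x := fun j =>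
    (((hu.fderiv_right (m := 2) (by norm_num)).clm_apply contDiff_const).norm_sq ℝ).contDiffAt
  set A : EuclideanSpace ℝ (Fin n) → ℝ := fun y => ∑ j, ‖fderiv ℝ u y (en n j)‖ ^ 2 with hA
  set B : EuclideanSpace ℝ (Fin n) → ℝ := fun y => ‖u y‖ ^ 2
  have hA2 : ContDiffAt ℝ 2 A x := ContDiffAt.sum fun j _ => hDu j
  have hB2 : ContDiffAt ℝ 2 B x := ((hu.of_le (by norm_num)).norm_sq ℝ).contDiffAt
  have hAB : ContDiffAt ℝ 2 (A + B) x := hA2.add hB2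
  have hAB1 : ContDiffAt ℝ 2 (A + B - fun _ => 1) x := hAB.sub contDiffAt_const
  have hsplit : pFunction u = (1 / 2 : ℝ) • (A + B - fun _ => 1) := by
    funext y
    simp only [pFunction, A, B, Pi.smul_apply, Pi.add_apply, Pi.sub_apply, smul_eq_mul]
    ring
  rw [hsplit, laplacian_smul _ hAB1, hAB.laplacian_sub contDiffAt_const, hA2.laplacian_add hB2,
    laplacian_const, hA, laplacian_fun_sum fun j _ => hDu j]
  simp

theorem laplacian_pFunction_of_ginzburgLandau (hu : ContDiff ℝ 3 u)
    (hsol : Δ u = fun y => (‖u y‖ ^ 2 - 1) • u y) (x : EuclideanSpace ℝ (Fin n)) :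
    Δ (pFunction u) x = (∑ i, ∑ j, ‖iteratedFDeriv ℝ 2 u x ![en n i, en n j]‖ ^ 2) +
      2 * ∑ j, ⟪u x, fderiv ℝ u x (en n j)⟫ ^ 2 + 2 * ‖u x‖ ^ 2 * pFunction u x := by
  have hD2u : DifferentiableAt ℝ (fderiv ℝ u) x :=
    (hu.fderiv_right (m := 2) (by norm_num)).differentiable (by norm_num) x
  have hgrad : ∀ j, Δ (fun y => ‖fderiv ℝ u y (en n j)‖ ^ 2) x =
      2 * (∑ i, ‖iteratedFDeriv ℝ 2 u x ![en n i, en n j]‖ ^ 2 +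
        ((‖u x‖ ^ 2 - 1) * ‖fderiv ℝ u x (en n j)‖ ^ 2 +
          2 * ⟪u x, fderiv ℝ u x (en n j)⟫ ^ 2)) := by
    intro j
    rw [((hu.fderiv_right (m := 2) (by norm_num)).clm_apply contDiff_const).laplacian_norm_sq
        (EuclideanSpace.basisFun _ ℝ), hu.laplacian_fderiv_apply, hsol,
      inner_fderiv_fderiv_norm_sq_sub_one_smul (hu.differentiable (by norm_num) x)]
    simp only [basisFun_eq_en, fderiv_fderiv_apply_eq_iteratedFDeriv hD2u]
  have hpot : Δ (fun y => ‖u y‖ ^ 2) x =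
      2 * (∑ i, ‖fderiv ℝ u x (en n i)‖ ^ 2 + (‖u x‖ ^ 2 - 1) * ‖u x‖ ^ 2) := by
    rw [(hu.of_le (by norm_num)).laplacian_norm_sq (EuclideanSpace.basisFun _ ℝ), hsol]
    simp only [basisFun_eq_en, real_inner_smul_right, real_inner_self_eq_norm_sq]
  rw [hu.laplacian_pFunction, hpot]
  simp only [hgrad, pFunction, Finset.sum_add_distrib, ← Finset.mul_sum]
  rw [Finset.sum_comm]
  ring

end GinzburgLandau

/-- Let `u ∈ C³(ℝⁿ, ℝ^m)` solve the Ginzburg–Landau system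
`Δu = (|u|² − 1)u`, and set `Q(u) = (|u|²−1)/2`, `P(x) = (1/2)|∇u(x)|² + Q(u(x))`.
Then `ΔP ≥ B + 2(2Q(u)+1)P ≥ 2|u|²P` pointwise whenever `P ≥ 0`,
where `B = Σ_{i,j}|u_{x_i x_j}|²`. -/
theorem GL_P_function_inequality (n m : ℕ)
    (u : EuclideanSpace ℝ (Fin n) → EuclideanSpace ℝ (Fin m)) (hu : ContDiff ℝ 3 u)
    (hsol : ∀ x, ∑ i : Fin n, iteratedFDeriv ℝ 2 u x ![en n i, en n i] =
      (‖u x‖ ^ 2 - 1) • u x) :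
    ∀ x : EuclideanSpace ℝ (Fin n),
      0 ≤ (1 / 2) * ∑ j : Fin n, ‖fderiv ℝ u x (en n j)‖ ^ 2 + (‖u x‖ ^ 2 - 1) / 2 →
      (∑ i : Fin n, iteratedFDeriv ℝ 2
          (fun y => (1 / 2) * ∑ j : Fin n, ‖fderiv ℝ u y (en n j)‖ ^ 2 +
            (‖u y‖ ^ 2 - 1) / 2) x ![en n i, en n i] ≥
        (∑ i : Fin n, ∑ j : Fin n, ‖iteratedFDeriv ℝ 2 u x ![en n i, en n j]‖ ^ 2) +
          2 * (2 * ((‖u x‖ ^ 2 - 1) / 2) + 1) *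
            ((1 / 2) * ∑ j : Fin n, ‖fderiv ℝ u x (en n j)‖ ^ 2 + (‖u x‖ ^ 2 - 1) / 2)) ∧
      ((∑ i : Fin n, ∑ j : Fin n, ‖iteratedFDeriv ℝ 2 u x ![en n i, en n j]‖ ^ 2) +
          2 * (2 * ((‖u x‖ ^ 2 - 1) / 2) + 1) *
            ((1 / 2) * ∑ j : Fin n, ‖fderiv ℝ u x (en n j)‖ ^ 2 + (‖u x‖ ^ 2 - 1) / 2) ≥
        2 * ‖u x‖ ^ 2 *
          ((1 / 2) * ∑ j : Fin n, ‖fderiv ℝ u x (en n j)‖ ^ 2 + (‖u x‖ ^ 2 - 1) / 2)) := by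
  intro x _
  have hΔu : Δ u = fun y => (‖u y‖ ^ 2 - 1) • u y :=
    funext fun y => (laplacian_eq_sum_en u y).trans (hsol y)
  have hΔP := laplacian_pFunction_of_ginzburgLandau hu hΔu x
  rw [laplacian_eq_sum_en] at hΔP
  unfold pFunction at hΔP
  have hB : 0 ≤ ∑ i : Fin n, ∑ j : Fin n, ‖iteratedFDeriv ℝ 2 u x ![en n i, en n j]‖ ^ 2 := by
    positivity
  have hT : 0 ≤ ∑ j : Fin n, ⟪u x, fderiv ℝ u x (en n j)⟫ ^ 2 := by positivity
  constructor
  · linarith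
  · linarith
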